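/- arXiv:1003.1350 — 7 statements merged into one kernel-verified Lean document; each statement's English description precedes it below -/
import Mathlib

section
/- For a smooth manifold M, vector fields X, Y and n-forms α, β, the higher-order Dorfman bracket ⟦X+α, Y+β⟧ = [X,Y] + L_X β − L_Y α + d(i_Y α) satisfies the left Leibniz (Jacobi) identity: ⟦e₁, ⟦e₂, e₃⟧⟧ = ⟦⟦e₁, e₂⟧, e₃⟧ + ⟦e₂, ⟦e₁, e₃⟧⟧ for all sections e₁, e₂, e₃ of TM ⊕ ΛⁿT*M. -/
/-- An abstract Cartan calculus: `C` plays the role of smooth functions `C^∞(M)`,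
`V` the vector fields `𝔛(M)`, `Ω` the differential forms on a smooth manifold `M`,
with Lie bracket `bra`, exterior derivative `d`, interior product `ι`,
Lie derivative `lie`, action of vector fields on functions `app`,
differential of functions `dC`, and wedge product `wdg`,
subject to the standard identities of the Cartan calculus. -/
structure CartanCalculus (C V Ω : Type*) [CommRing C] [Algebra ℝ C]
    [AddCommGroup V] [Module C V] [AddCommGroup Ω] [Module ℝ Ω] [Module C Ω] where
  bra : V → V → V
  d : Ω → Ω
  ι : V → Ω → Ω
  lie : V → Ω → Ω
  app : V → C → C
  dC : C → Ω
  wdg : Ω → Ω → Ω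
  bra_self : ∀ X, bra X X = 0
  bra_add_left : ∀ X Y Z, bra (X + Y) Z = bra X Z + bra Y Z
  bra_add_right : ∀ X Y Z, bra X (Y + Z) = bra X Y + bra X Z
  bra_leibniz : ∀ X Y Z, bra X (bra Y Z) = bra (bra X Y) Z + bra Y (bra X Z)
  bra_smul_right : ∀ (f : C) (X Y), bra X (f • Y) = f • bra X Y + app X f • Y
  bra_smul_left : ∀ (f : C) (X Y), bra (f • X) Y = f • bra X Y - app Y f • X
  d_add : ∀ α β, d (α + β) = d α + d β
  d_rsmul : ∀ (r : ℝ) (α), d (r • α) = r • d α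
  d_csmul : ∀ (f : C) (α), d (f • α) = wdg (dC f) α + f • d α
  d_d : ∀ α, d (d α) = 0
  d_dC : ∀ f : C, d (dC f) = 0
  ι_addV : ∀ X Y α, ι (X + Y) α = ι X α + ι Y α
  ι_add : ∀ X α β, ι X (α + β) = ι X α + ι X β
  ι_rsmul : ∀ X (r : ℝ) (α), ι X (r • α) = r • ι X α
  ι_csmul : ∀ X (f : C) (α), ι X (f • α) = f • ι X α
  ι_smulV : ∀ (f : C) (X α), ι (f • X) α = f • ι X α
  ι_ι : ∀ X Y α, ι X (ι Y α) = - ι Y (ι X α)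
  lie_add : ∀ X α β, lie X (α + β) = lie X α + lie X β
  lie_rsmul : ∀ X (r : ℝ) (α), lie X (r • α) = r • lie X α
  lie_csmul : ∀ X (f : C) (α), lie X (f • α) = f • lie X α + app X f • α
  lie_smulV : ∀ (f : C) (X α), lie (f • X) α = f • lie X α + wdg (dC f) (ι X α)
  cartan : ∀ X α, lie X α = ι X (d α) + d (ι X α)
  d_lie : ∀ X α, d (lie X α) = lie X (d α)
  ι_bra : ∀ X Y α, ι (bra X Y) α = lie X (ι Y α) - ι Y (lie X α)
  lie_lie : ∀ X Y α, lie X (lie Y α) - lie Y (lie X α) = lie (bra X Y) α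
  wdg_closed : ∀ α β, d α = 0 → d β = 0 → d (wdg α β) = 0

variable {C V Ω : Type*} [CommRing C] [Algebra ℝ C]
  [AddCommGroup V] [Module C V] [AddCommGroup Ω] [Module ℝ Ω] [Module C Ω]

/-- The higher-order Dorfman bracket on sections of `TM ⊕ ΛⁿT*M` (pairs `X + α`):
`⟦X+α, Y+β⟧ = [X,Y] + L_X β − L_Y α + d(i_Y α)`. -/
def Dorf (K : CartanCalculus C V Ω) (e₁ e₂ : V × Ω) : V × Ω :=
  (K.bra e₁.1 e₂.1, K.lie e₁.1 e₂.2 - K.lie e₂.1 e₁.2 + K.d (K.ι e₂.1 e₁.2))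

section Helpers
variable (K : CartanCalculus C V Ω)

lemma Kd_sub (α β : Ω) : K.d (α - β) = K.d α - K.d β := by
  have h := K.d_add (α - β) β
  rw [sub_add_cancel] at h
  exact eq_sub_of_add_eq h.symm

lemma Kd_zero : K.d 0 = 0 := by
  simpa using Kd_sub K 0 0

lemma Kι_sub (X : V) (α β : Ω) : K.ι X (α - β) = K.ι X α - K.ι X β := by
  have h := K.ι_add X (α - β) β
  rw [sub_add_cancel] at h
  exact eq_sub_of_add_eq h.symm

lemma Kι_zero (X : V) : K.ι X 0 = 0 := by
  simpa using Kι_sub K X 0 0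

lemma Klie_sub (X : V) (α β : Ω) : K.lie X (α - β) = K.lie X α - K.lie X β := by
  have h := K.lie_add X (α - β) β
  rw [sub_add_cancel] at h
  exact eq_sub_of_add_eq h.symm

lemma Klie_lie' (X Y : V) (α : Ω) :
    K.lie X (K.lie Y α) = K.lie (K.bra X Y) α + K.lie Y (K.lie X α) := by
  have h := K.lie_lie X Y α
  rw [← h]; abel

lemma Klie_bra (X Y : V) (α : Ω) :
    K.lie (K.bra X Y) α = K.lie X (K.lie Y α) - K.lie Y (K.lie X α) :=
  (K.lie_lie X Y α).symm

lemma Kd_ι_bra (X Y : V) (α : Ω) :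
    K.d (K.ι (K.bra X Y) α) = K.lie X (K.d (K.ι Y α)) - K.d (K.ι Y (K.lie X α)) := by
  rw [K.ι_bra, Kd_sub, K.d_lie]

lemma Klie_d_ι (X Y : V) (α : Ω) :
    K.lie X (K.d (K.ι Y α)) = K.d (K.ι X (K.d (K.ι Y α))) := by
  rw [K.cartan X (K.d (K.ι Y α)), K.d_d, Kι_zero, zero_add]

end Helpers

/-- The higher-order Dorfman bracket satisfies the left Leibniz (Jacobi) identity:
`⟦e₁, ⟦e₂, e₃⟧⟧ = ⟦⟦e₁, e₂⟧, e₃⟧ + ⟦e₂, ⟦e₁, e₃⟧⟧`. -/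
theorem dorfman_leibniz (K : CartanCalculus C V Ω) (e₁ e₂ e₃ : V × Ω) :
    Dorf K e₁ (Dorf K e₂ e₃) = Dorf K (Dorf K e₁ e₂) e₃ + Dorf K e₂ (Dorf K e₁ e₃) := by
  obtain ⟨X₁, α₁⟩ := e₁
  obtain ⟨X₂, α₂⟩ := e₂
  obtain ⟨X₃, α₃⟩ := e₃
  unfold Dorf
  refine Prod.ext (K.bra_leibniz X₁ X₂ X₃) ?_
  simp only [Prod.snd_add, Klie_sub, K.lie_add, Kι_sub, K.ι_add, Kd_sub, K.d_add]
  rw [Klie_lie' K X₁ X₂ α₃, Klie_lie' K X₁ X₃ α₂, Klie_bra K X₂ X₃ α₁,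
    Kd_ι_bra K X₂ X₃ α₁, Kd_ι_bra K X₁ X₃ α₂,
    Klie_d_ι K X₁ X₃ α₂, Klie_d_ι K X₂ X₃ α₁, Klie_d_ι K X₃ X₂ α₁]
  abel
end

section
/- For any (n+1)-form Φ on M, the gauge transformation e^Φ(X+α) = X + α + i_X Φ intertwines the deformed and undeformed higher-order Dorfman brackets: e^Φ⟦e₁, e₂⟧_{dΦ} = ⟦e^Φ(e₁), e^Φ(e₂)⟧ for all sections e₁, e₂ of TM ⊕ ΛⁿT*M. -/
variable {C V Ω : Type*} [CommRing C] [Algebra ℝ C]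
  [AddCommGroup V] [Module C V] [AddCommGroup Ω] [Module ℝ Ω] [Module C Ω]

/-- The `Θ`-deformed higher-order Dorfman bracket:
`⟦X+α, Y+β⟧_Θ = [X,Y] + L_X β − L_Y α + d(i_Y α) + i_{X∧Y}Θ`,
where `i_{X∧Y}Θ = i_Y i_X Θ`. -/
def DorfTheta (K : CartanCalculus C V Ω) (Θ : Ω) (e₁ e₂ : V × Ω) : V × Ω :=
  (K.bra e₁.1 e₂.1,
    K.lie e₁.1 e₂.2 - K.lie e₂.1 e₁.2 + K.d (K.ι e₂.1 e₁.2) + K.ι e₂.1 (K.ι e₁.1 Θ))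

/-- The gaugeTr transformation `e^Φ(X + α) = X + α + i_X Φ`. -/
def gaugeTr (K : CartanCalculus C V Ω) (Φ : Ω) (e : V × Ω) : V × Ω :=
  (e.1, e.2 + K.ι e.1 Φ)

/-- The gaugeTr transformation `e^Φ` intertwines the `dΦ`-deformed and the undeformed
higher-order Dorfman brackets: `e^Φ⟦e₁, e₂⟧_{dΦ} = ⟦e^Φ(e₁), e^Φ(e₂)⟧`. -/
theorem gauge_intertwines (K : CartanCalculus C V Ω) (Φ : Ω) (e₁ e₂ : V × Ω) :
    gaugeTr K Φ (DorfTheta K (K.d Φ) e₁ e₂) = Dorf K (gaugeTr K Φ e₁) (gaugeTr K Φ e₂) := by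
  obtain ⟨X, α⟩ := e₁
  obtain ⟨Y, β⟩ := e₂
  simp only [gaugeTr, DorfTheta, Dorf, Prod.mk.injEq]
  refine ⟨trivial, ?_⟩
  rw [K.lie_add, K.lie_add, K.ι_add, K.d_add, K.ι_bra, K.cartan X Φ, K.ι_add,
    K.cartan Y (K.ι X Φ)]
  abel
end

section
/- Let π be a Nambu-Poisson structure of order n on M. The bracket [α,β]_π = L_{π♯(α)} β − L_{π♯(β)} α + d i_{π♯(β)} α on n-forms satisfies π♯[α,β]_π = [π♯(α), π♯(β)], and (ΛⁿT*M, [·,·]_π, π♯) is a Leibniz algebroid: [α,[β,γ]_π]_π = [[α,β]_π,γ]_π + [β,[α,γ]_π]_π and [α, fβ]_π = f[α,β]_π + (π♯(α)f)β. -/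
variable {C V Ω : Type*} [CommRing C] [Algebra ℝ C]
  [AddCommGroup V] [Module C V] [AddCommGroup Ω] [Module ℝ Ω] [Module C Ω]

/-- The bracket `[α,β]_π = L_{π♯(α)} β − L_{π♯(β)} α + d i_{π♯(β)} α` on `n`-forms
induced by an `(n+1)`-vector field `π`, encoded by its contraction map `sharp = π♯`. -/
def NPBr (K : CartanCalculus C V Ω) (sharp : Ω → V) (α β : Ω) : Ω :=
  K.lie (sharp α) β - K.lie (sharp β) α + K.d (K.ι (sharp β) α)

/-- For a Nambu–Poisson structure `π` of order `n` (encoded by `sharp = π♯`, with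
the Nambu–Poisson property expressed by closure of the graph of `π♯` under the
higher-order Dorfman bracket, hypothesis `hcl`), the bracket
`[α,β]_π = L_{π♯α}β − L_{π♯β}α + d i_{π♯β}α` satisfies `π♯[α,β]_π = [π♯α, π♯β]`,
the left Leibniz identity, and the anchored Leibniz rule; hence
`(ΛⁿT*M, [·,·]_π, π♯)` is a Leibniz algebroid. -/
theorem nambu_poisson_leibniz_algebroid (K : CartanCalculus C V Ω)
    (sharp : Ω → V)
    (hadd : ∀ α β : Ω, sharp (α + β) = sharp α + sharp β)
    (hsmul : ∀ (f : C) (α : Ω), sharp (f • α) = f • sharp α)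
    (hcl : ∀ α β : Ω, K.bra (sharp α) (sharp β) = sharp (NPBr K sharp α β)) :
    (∀ α β : Ω, sharp (NPBr K sharp α β) = K.bra (sharp α) (sharp β)) ∧
      (∀ α β γ : Ω,
        NPBr K sharp α (NPBr K sharp β γ) =
          NPBr K sharp (NPBr K sharp α β) γ + NPBr K sharp β (NPBr K sharp α γ)) ∧
      (∀ (f : C) (α β : Ω),
        NPBr K sharp α (f • β) = f • NPBr K sharp α β + K.app (sharp α) f • β) := by
  have izero : ∀ X : V, K.ι X (0:Ω) = 0 := by
    intro X
    have h := K.ι_rsmul X 0 0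
    simpa using h
  have dsub : ∀ α β : Ω, K.d (α - β) = K.d α - K.d β := by
    intro α β
    have h := K.d_add (α - β) β
    rw [sub_add_cancel] at h
    exact eq_sub_of_add_eq h.symm
  have ιsub : ∀ (X : V) (α β : Ω), K.ι X (α - β) = K.ι X α - K.ι X β := by
    intro X α β
    have h := K.ι_add X (α - β) β
    rw [sub_add_cancel] at h
    exact eq_sub_of_add_eq h.symm
  have liesub : ∀ (X : V) (α β : Ω), K.lie X (α - β) = K.lie X α - K.lie X β := by
    intro X α β
    have h := K.lie_add X (α - β) β
    rw [sub_add_cancel] at h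
    exact eq_sub_of_add_eq h.symm
  have key : ∀ α β : Ω, NPBr K sharp α β = K.lie (sharp α) β - K.ι (sharp β) (K.d α) := by
    intro α β
    rw [NPBr, K.cartan (sharp β) α]
    abel
  have dι : ∀ (X : V) (α : Ω), K.d (K.ι X (K.d α)) = K.lie X (K.d α) := by
    intro X α
    rw [K.cartan X (K.d α), K.d_d, izero]
    abel
  have dkey : ∀ α β : Ω, K.d (NPBr K sharp α β)
      = K.lie (sharp α) (K.d β) - K.lie (sharp β) (K.d α) := by
    intro α β
    rw [key, dsub, K.d_lie, dι]
  refine ⟨fun α β => (hcl α β).symm, ?_, ?_⟩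
  · intro α β γ
    rw [key α (NPBr K sharp β γ), key (NPBr K sharp α β) γ, key β (NPBr K sharp α γ),
      ← hcl β γ, ← hcl α β, ← hcl α γ, dkey, key β γ, key α γ,
      liesub, liesub, ιsub, K.ι_bra, K.ι_bra, ← K.lie_lie]
    abel
  · intro f α β
    rw [NPBr, NPBr, K.lie_csmul, hsmul, K.lie_smulV, K.ι_smulV, K.d_csmul,
      smul_add, smul_sub]
    abel
end

section
/- Let π be a Nambu-Poisson structure of order n on M. Define {ξ,η}_π = L_{π♯(dξ)} η for (n−1)-forms ξ, η. Then d{ξ,η}_π = [dξ, dη]_π, and (Ω^{n−1}(M), {·,·}_π) is a Leibniz algebra: {ξ,{η,γ}_π}_π = {{ξ,η}_π,γ}_π + {η,{ξ,γ}_π}_π. -/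
variable {C V Ω : Type*} [CommRing C] [Algebra ℝ C]
  [AddCommGroup V] [Module C V] [AddCommGroup Ω] [Module ℝ Ω] [Module C Ω]

/-- For a Nambu–Poisson structure `π` of order `n` (encoded by `sharp = π♯`, with the
Nambu–Poisson property expressed by closure of the graph under the higher-order
Dorfman bracket, hypothesis `hcl`), the bracket `{ξ,η}_π = L_{π♯(dξ)} η` on
`(n−1)`-forms satisfies `d{ξ,η}_π = [dξ, dη]_π` and the left Leibniz identity, so
`(Ω^{n−1}(M), {·,·}_π)` is a Leibniz algebra. -/
theorem nambu_poisson_leibniz_algebra (K : CartanCalculus C V Ω)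
    (sharp : Ω → V)
    (hadd : ∀ α β : Ω, sharp (α + β) = sharp α + sharp β)
    (hsmul : ∀ (f : C) (α : Ω), sharp (f • α) = f • sharp α)
    (hcl : ∀ α β : Ω, K.bra (sharp α) (sharp β) = sharp (NPBr K sharp α β)) :
    (∀ ξ η : Ω, K.d (K.lie (sharp (K.d ξ)) η) = NPBr K sharp (K.d ξ) (K.d η)) ∧
      (∀ ξ η γ : Ω,
        K.lie (sharp (K.d ξ)) (K.lie (sharp (K.d η)) γ) =
          K.lie (sharp (K.d (K.lie (sharp (K.d ξ)) η))) γ +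
            K.lie (sharp (K.d η)) (K.lie (sharp (K.d ξ)) γ)) := by
  have hd : ∀ ξ η : Ω, K.d (K.lie (sharp (K.d ξ)) η) = NPBr K sharp (K.d ξ) (K.d η) := by
    intro ξ η
    unfold NPBr
    have hι : K.ι (sharp (K.d η)) (0 : Ω) = 0 := by
      have := K.ι_rsmul (sharp (K.d η)) 0 (0 : Ω)
      simpa using this
    rw [K.d_lie, K.cartan (sharp (K.d η)) (K.d ξ), K.d_d, hι]
    abel
  refine ⟨hd, fun ξ η γ => ?_⟩
  rw [hd ξ η, ← hcl, ← K.lie_lie]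
  abel
end

section
/- Let (M,ω) be an n-plectic manifold and let α = i_{X_α}ω, β = i_{X_β}ω be admissible n-forms. Then the bracket [α,β]_ω = L_{X_α}β − L_{X_β}α − d i_{X_α} i_{X_β} ω is again admissible, with Hamiltonian vector field [X_α, X_β], i.e. [α,β]_ω = i_{[X_α,X_β]} ω. -/
variable {C V Ω : Type*} [CommRing C] [Algebra ℝ C]
  [AddCommGroup V] [Module C V] [AddCommGroup Ω] [Module ℝ Ω] [Module C Ω]

/-- On an `n`-plectic manifold `(M, ω)` (`ω` closed and nondegenerate), the bracket
of admissible forms `α = i_X ω`, `β = i_Y ω`,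
`[α,β]_ω = L_X β − L_Y α − d i_X i_Y ω`, is again admissible with Hamiltonian
vector field `[X,Y]`: it equals `i_{[X,Y]} ω`. -/
theorem admissible_bracket_admissible (K : CartanCalculus C V Ω) (ω : Ω)
    (hclosed : K.d ω = 0) (hnd : ∀ X : V, K.ι X ω = 0 → X = 0) (X Y : V) :
    K.lie X (K.ι Y ω) - K.lie Y (K.ι X ω) - K.d (K.ι X (K.ι Y ω)) =
      K.ι (K.bra X Y) ω := by
  have hdneg : ∀ α : Ω, K.d (-α) = -K.d α := by
    intro α
    have := K.d_rsmul (-1 : ℝ) α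
    simpa [neg_smul, one_smul] using this
  have h1 : K.lie X ω = K.d (K.ι X ω) := by
    rw [K.cartan, hclosed]
    have := K.ι_rsmul X (0 : ℝ) ω
    simp only [zero_smul] at this
    rw [this, zero_add]
  have h2 : K.lie Y (K.ι X ω) = K.ι Y (K.d (K.ι X ω)) + K.d (K.ι Y (K.ι X ω)) :=
    K.cartan Y (K.ι X ω)
  rw [K.ι_bra, ← h1] at *
  rw [h2, K.ι_ι X Y ω, hdneg]
  abel
end

section
/- Let (M,ω) be an n-plectic manifold. The admissible bundle A ⊂ ΛⁿT*M with bracket [α,β]_ω = L_{X_α}β − L_{X_β}α − d i_{X_α} i_{X_β} ω and anchor ω♮(α) = X_α is a Lie algebroid: the bracket is skew-symmetric, satisfies the Jacobi identity [[α,β]_ω,γ]_ω + [[β,γ]_ω,α]_ω + [[γ,α]_ω,β]_ω = 0, and satisfies the Leibniz rule [α, fβ]_ω = f[α,β]_ω + (ω♮(α)f)β. -/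
variable {C V Ω : Type*} [CommRing C] [Algebra ℝ C]
  [AddCommGroup V] [Module C V] [AddCommGroup Ω] [Module ℝ Ω] [Module C Ω]

/-- The bracket of admissible `n`-forms `α = i_X ω`, `β = i_Y ω` on an `n`-plectic
manifold `(M, ω)`: `[α,β]_ω = L_{X}β − L_{Y}α − d i_X i_Y ω`, expressed through the
Hamiltonian vector fields `X`, `Y`. -/
def PlBr (K : CartanCalculus C V Ω) (ω : Ω) (X Y : V) : Ω :=
  K.lie X (K.ι Y ω) - K.lie Y (K.ι X ω) - K.d (K.ι X (K.ι Y ω))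

/-- On an `n`-plectic manifold `(M, ω)`, the admissible bundle with bracket
`[α,β]_ω = L_{X_α}β − L_{X_β}α − d i_{X_α} i_{X_β} ω` (expressed via Hamiltonian
vector fields, `α = i_X ω`) and anchor `ω♮(α) = X_α` is a Lie algebroid: the bracket
is skew-symmetric, satisfies the Jacobi identity (using `X_{[α,β]_ω} = [X_α,X_β]`),
and the Leibniz rule `[α, fβ]_ω = f[α,β]_ω + (ω♮(α) f) β` (where `X_{fβ} = f X_β`). -/
theorem admissible_lie_algebroid (K : CartanCalculus C V Ω) (ω : Ω)
    (hclosed : K.d ω = 0) (hnd : ∀ X : V, K.ι X ω = 0 → X = 0) :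
    (∀ X Y : V, PlBr K ω X Y = -PlBr K ω Y X) ∧
      (∀ X Y Z : V,
        PlBr K ω (K.bra X Y) Z + PlBr K ω (K.bra Y Z) X + PlBr K ω (K.bra Z X) Y = 0) ∧
      (∀ (f : C) (X Y : V),
        K.lie X (f • K.ι Y ω) - K.lie (f • Y) (K.ι X ω) - K.d (K.ι X (K.ι (f • Y) ω)) =
          f • PlBr K ω X Y + K.app X f • K.ι Y ω) := by

  have dneg : ∀ α : Ω, K.d (-α) = -K.d α := by
    intro α
    have h := K.d_rsmul (-1) α
    simpa using h
  have ι0 : ∀ X : V, K.ι X (0:Ω) = 0 := by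
    intro X
    have h := K.ι_rsmul X 0 0
    simpa using h
  have ιV0 : K.ι (0:V) ω = 0 := by
    have h := K.ι_smulV (0:C) 0 ω
    simpa using h
  have braskew : ∀ X Y : V, K.bra X Y = -K.bra Y X := by
    intro X Y
    have h := K.bra_self (X + Y)
    rw [K.bra_add_left, K.bra_add_right, K.bra_add_right, K.bra_self, K.bra_self] at h
    have h' : K.bra X Y + K.bra Y X = 0 := by
      rw [← h]; abel
    exact eq_neg_of_add_eq_zero_left h'
  have bra0l : ∀ Y : V, K.bra 0 Y = 0 := by
    intro Y
    have h := K.bra_add_left 0 0 Y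
    simpa using h.symm
  have branegl : ∀ X Y : V, K.bra (-X) Y = -K.bra X Y := by
    intro X Y
    have h := K.bra_add_left X (-X) Y
    simp only [add_neg_cancel, bra0l] at h
    exact eq_neg_of_add_eq_zero_right h.symm
  have ιnegV : ∀ X : V, K.ι (-X) ω = -K.ι X ω := by
    intro X
    have h := K.ι_smulV (-1 : C) X ω
    simpa using h
  have key : ∀ X Y : V, PlBr K ω X Y = K.ι (K.bra X Y) ω := by
    intro X Y
    have lieω : ∀ Z : V, K.lie Z ω = K.d (K.ι Z ω) := by
      intro Z
      rw [K.cartan, hclosed, ι0, zero_add]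
    have h := K.ι_bra X Y ω
    rw [lieω X] at h
    have hc : K.ι Y (K.d (K.ι X ω))
        = K.lie Y (K.ι X ω) - K.d (K.ι Y (K.ι X ω)) := by
      rw [K.cartan Y (K.ι X ω)]; abel
    rw [hc, K.ι_ι Y X, dneg] at h
    unfold PlBr
    rw [h]; abel
  refine ⟨?_, ?_, ?_⟩
  · intro X Y
    rw [key, key, braskew, ιnegV]
  · intro X Y Z
    rw [key, key, key, ← K.ι_addV, ← K.ι_addV]
    have jac : K.bra (K.bra X Y) Z + K.bra (K.bra Y Z) X + K.bra (K.bra Z X) Y = 0 := by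
      have h1 := K.bra_leibniz X Y Z
      have h2 : K.bra (K.bra Y Z) X = -K.bra X (K.bra Y Z) := braskew _ _
      have h3 : K.bra (K.bra Z X) Y = K.bra Y (K.bra X Z) := by
        rw [braskew Z X, branegl, braskew, neg_neg]
      rw [h2, h3, h1]
      abel
    rw [jac, ιV0]
  · intro f X Y
    have h1 : K.ι X (K.ι (f • Y) ω) = -(f • K.ι Y (K.ι X ω)) := by
      rw [K.ι_ι X (f • Y), K.ι_smulV]
    rw [K.lie_csmul, K.lie_smulV, h1, dneg, K.d_csmul]
    have h2 : K.d (K.ι Y (K.ι X ω)) = -K.d (K.ι X (K.ι Y ω)) := by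
      rw [K.ι_ι Y X, dneg]
    unfold PlBr
    rw [h2, smul_sub, smul_sub, smul_neg]
    abel
end

section
/- Let (M,ω) be an n-plectic manifold and ξ, η Hamiltonian (n−1)-forms (dξ = i_{X_ξ}ω, dη = i_{X_η}ω). Then [dξ, dη]_ω = d L_{X_ξ} η; in particular the bracket of exact admissible n-forms is exact, and the hemi-bracket {ξ,η}_h = L_{X_ξ}η satisfies d{ξ,η}_h = [dξ, dη]_ω. -/
variable {C V Ω : Type*} [CommRing C] [Algebra ℝ C]
  [AddCommGroup V] [Module C V] [AddCommGroup Ω] [Module ℝ Ω] [Module C Ω]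

/-- On an `n`-plectic manifold `(M, ω)`, for Hamiltonian `(n−1)`-forms `ξ, η`
(`dξ = i_{X_ξ}ω`, `dη = i_{X_η}ω`), the bracket of the exact admissible forms
`[dξ, dη]_ω = L_{X_ξ} dη − L_{X_η} dξ − d i_{X_ξ} i_{X_η} ω` equals `d L_{X_ξ} η`;
in particular it is exact, and the hemi-bracket `{ξ,η}_h = L_{X_ξ}η` satisfies
`d{ξ,η}_h = [dξ, dη]_ω`. -/
theorem exact_admissible_bracket (K : CartanCalculus C V Ω) (ω : Ω)
    (hclosed : K.d ω = 0) (hnd : ∀ X : V, K.ι X ω = 0 → X = 0)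
    (ξ η : Ω) (Xξ Xη : V) (hξ : K.d ξ = K.ι Xξ ω) (hη : K.d η = K.ι Xη ω) :
    K.lie Xξ (K.d η) - K.lie Xη (K.d ξ) - K.d (K.ι Xξ (K.ι Xη ω)) =
      K.d (K.lie Xξ η) := by
  -- interior product with zero form vanishes
  have ιz : ∀ X : V, K.ι X (0:Ω) = 0 := fun X => by
    have h := K.ι_rsmul X 0 0
    simpa using h
  -- antisymmetry of the bracket
  have bra_anti : K.bra Xη Xξ = - K.bra Xξ Xη := by
    have h := K.bra_self (Xξ + Xη)
    rw [K.bra_add_left, K.bra_add_right, K.bra_add_right, K.bra_self, K.bra_self,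
      zero_add, add_zero] at h
    exact eq_neg_of_add_eq_zero_right h
  have ι_neg : ∀ (Z : V) (α : Ω), K.ι (-Z) α = - K.ι Z α := fun Z α => by
    rw [← neg_one_smul C Z, K.ι_smulV, neg_one_smul]
  -- ω is invariant under Hamiltonian vector fields
  have lieω : ∀ X : V, K.d (K.ι X ω) = 0 → K.lie X ω = 0 := fun X h => by
    rw [K.cartan, hclosed, h, ιz, add_zero]
  have h1 : K.lie Xξ ω = 0 := lieω Xξ (by rw [← hξ, K.d_d])
  have h2 : K.lie Xη ω = 0 := lieω Xη (by rw [← hη, K.d_d])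
  have key : ∀ X Y : V, K.lie X ω = 0 → K.lie X (K.ι Y ω) = K.ι (K.bra X Y) ω := by
    intro X Y h
    have hb := K.ι_bra X Y ω
    rw [h, ιz, sub_zero] at hb
    exact hb.symm
  -- rewrite each term
  have t1 : K.lie Xη (K.d ξ) = K.ι (K.bra Xη Xξ) ω := by
    rw [hξ]; exact key Xη Xξ h2
  have t2 : K.d (K.ι Xξ (K.ι Xη ω)) = K.ι (K.bra Xξ Xη) ω := by
    have hz : K.d (K.ι Xη ω) = 0 := by rw [← hη]; exact K.d_d η
    have hc := K.cartan Xξ (K.ι Xη ω)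
    rw [hz, ιz, zero_add] at hc
    rw [← hc]
    exact key Xξ Xη h1
  rw [t1, t2, bra_anti, ι_neg, K.d_lie]
  abel
end
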